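/- For every K ≥ 1, N ∈ ℕ, and q ≥ 1 there exists a constant M (depending only on K, N, q) with the following property. Let X be a topological space with a K-bounded finite cover S. Let C = ⊔ᵢ Jᵢ be a compact 1-manifold with weights wᵢ > 0 satisfying Σᵢ wᵢ = 1, and let c¹ = Σᵢ wᵢ γᵢ¹ and c² = Σᵢ wᵢ γᵢ² be two normalized weighted multi-curves on X with strands γᵢ¹, γᵢ² : Jᵢ → X. Suppose that for each i, the image of γᵢ¹ is contained in the union of the elements of S^N that meet the image of γᵢ², and the image of γᵢ² is contained in the union of the elements of S^N that meet the image of γᵢ¹. Then M⁻¹ · mod_q(c², S) ≤ mod_q(c¹, S) ≤ M · mod_q(c², S). -/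

import Mathlib

open Set

noncomputable section

attribute [local instance] Classical.propDecidable

/-- The domain of a curve: a closed interval or a circle. -/
inductive CurveDomain
  | interval
  | circle

/-- The underlying topological space of a curve domain. -/
def CurveDomain.space : CurveDomain → Type
  | .interval => unitInterval
  | .circle => AddCircle (1 : ℝ)

instance (d : CurveDomain) : TopologicalSpace d.space :=
  match d with
  | .interval => inferInstanceAs (TopologicalSpace unitInterval)
  | .circle => inferInstanceAs (TopologicalSpace (AddCircle (1 : ℝ)))

/-- A curve on `X`: a continuous map from a compact connected 1-manifold
(a closed interval or a circle) to `X`. -/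
structure Curve (X : Type*) [TopologicalSpace X] where
  dom : CurveDomain
  toFun : dom.space → X
  continuous : Continuous toFun

/-- A weighted multi-curve on `X`: a finite formal sum `Σᵢ wᵢ γᵢ` of curves with positive
real weights. -/
structure WMCurve (X : Type*) [TopologicalSpace X] where
  ι : Type
  fin : Fintype ι
  w : ι → ℝ
  w_pos : ∀ i, 0 < w i
  strand : ι → Curve X

attribute [instance] WMCurve.fin

variable {X : Type*} [TopologicalSpace X] {ι : Type} [Fintype ι]

/-- The `ρ`-length of a curve with respect to the finite family `S`: the sum of `ρ` over the
members of the family meeting the image of the curve. -/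
def Curve.len (γ : Curve X) (S : ι → Set X) (ρ : ι → ℝ) : ℝ :=
  ∑ i, if (Set.range γ.toFun ∩ S i).Nonempty then ρ i else 0

/-- The `ρ`-length of a weighted multi-curve. -/
def WMCurve.len (c : WMCurve X) (S : ι → Set X) (ρ : ι → ℝ) : ℝ :=
  ∑ j, c.w j * (c.strand j).len S ρ

/-- A test metric `ρ` is admissible for a family `Γ` of weighted multi-curves if it is
nonnegative and every member of `Γ` has `ρ`-length at least 1. -/
def Admissible (Γ : Set (WMCurve X)) (S : ι → Set X) (ρ : ι → ℝ) : Prop :=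
  (∀ i, 0 ≤ ρ i) ∧ ∀ c ∈ Γ, 1 ≤ c.len S ρ

/-- The combinatorial `q`-modulus of a family of weighted multi-curves with respect to the
finite family `S`. -/
def modulus (q : ℝ) (Γ : Set (WMCurve X)) (S : ι → Set X) : ℝ :=
  sInf {V | ∃ ρ : ι → ℝ, Admissible Γ S ρ ∧ V = ∑ i, ρ i ^ q}

/-- A single (unweighted) curve, regarded as a weighted multi-curve with one strand of
weight 1. -/
def Curve.toWMC (γ : Curve X) : WMCurve X :=
  ⟨PUnit, inferInstance, fun _ => 1, fun _ => one_pos, fun _ => γ⟩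

/-- The combinatorial `q`-modulus of a family of curves. -/
def curveModulus (q : ℝ) (Γ : Set (Curve X)) (S : ι → Set X) : ℝ :=
  modulus q (Curve.toWMC '' Γ) S



/-- The union of the members of the family `T` that meet the set `E`. -/
def starNbhd {X : Type*} {ι : Type} (T : ι → Set X) (E : Set X) : Set X :=
  ⋃ j ∈ {j : ι | (T j ∩ E).Nonempty}, T j

/-- Iterated star: `iterStar S 0 = S` and `iterStar S (N+1) i` is the union of the members of
`S` meeting `iterStar S N i`. -/
def iterStar {X : Type*} {ι : Type} (S : ι → Set X) : ℕ → ι → Set X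
  | 0 => S
  | (N + 1) => fun i => starNbhd S (iterStar S N i)

/-- The cover `S^N` (so that `S^1 = S`, and `S^{N+1}` is obtained from `S^N` by taking unions of
the members of `S` meeting a given member); its members are in natural bijection with those
of `S`. -/
def coverPow {X : Type*} {ι : Type} (S : ι → Set X) (N : ℕ) : ι → Set X :=
  iterStar S (N - 1)


/-!
An admissible metric `ρ` for `c¹` is pushed to `c²` by letting each member `S j`
carry the total `ρ`-mass of the members of `S` that meet `S^{2N}_j`. Every member met by a strand
of `c¹` meets `S^{2N}_j` for some `S j` met by the corresponding strand of `c²`, so the pushed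
metric is admissible for `c²`. By `K`-boundedness each sum has at most `K^{2N}` terms and each
`ρ i` enters at most `K^{2N}` of them, so the power-mean inequality bounds the `q`-volume of the
pushed metric by `K^{2Nq}` times that of `ρ`.
-/

theorem Finset.sum_biUnion_le_sum_sum {α β : Type*} [DecidableEq α] (U : Finset β)
    (B : β → Finset α) {f : α → ℝ} (hf : ∀ a, 0 ≤ f a) :
    ∑ a ∈ U.biUnion B, f a ≤ ∑ b ∈ U, ∑ a ∈ B b, f a := by
  rw [← Finset.sup_eq_biUnion]
  refine Finset.apply_sup_le_sum (f := fun s => ∑ a ∈ s, f a) Finset.sum_empty (fun {s t} => ?_) U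
  rw [Finset.sup_eq_union]
  linarith [Finset.sum_union_inter (s₁ := s) (s₂ := t) (f := f),
    Finset.sum_nonneg (s := s ∩ t) fun a _ => hf a]

theorem sum_rpow_sum_le_of_card_le {ι κ : Type*} [Fintype ι] [Fintype κ] (B : κ → Finset ι) {D : ℕ}
    (hrow : ∀ j, (B j).card ≤ D) (hcol : ∀ i, (Finset.univ.filter fun j => i ∈ B j).card ≤ D)
    {q : ℝ} (hq : 1 ≤ q) {ρ : ι → ℝ} (hρ : ∀ i, 0 ≤ ρ i) :
    ∑ j, (∑ i ∈ B j, ρ i) ^ q ≤ (D : ℝ) ^ q * ∑ i, ρ i ^ q := by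
  have hρq : ∀ i, 0 ≤ ρ i ^ q := fun i => Real.rpow_nonneg (hρ i) q
  calc ∑ j, (∑ i ∈ B j, ρ i) ^ q
      ≤ ∑ j, (D : ℝ) ^ (q - 1) * ∑ i ∈ B j, ρ i ^ q := by
        refine Finset.sum_le_sum fun j _ =>
          (Real.rpow_sum_le_const_mul_sum_rpow_of_nonneg _ hq fun i _ => hρ i).trans ?_
        gcongr
        · exact Finset.sum_nonneg fun i _ => hρq i
        · exact_mod_cast hrow j
    _ = (D : ℝ) ^ (q - 1) * ∑ i, (Finset.univ.filter fun j => i ∈ B j).card * ρ i ^ q := by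
        rw [← Finset.mul_sum, Finset.sum_comm' (t' := Finset.univ)
          (s' := fun i => Finset.univ.filter fun j => i ∈ B j) (by simp)]
        simp
    _ ≤ (D : ℝ) ^ (q - 1) * ∑ i, D * ρ i ^ q := by
        gcongr with i
        · exact hρq i
        · exact_mod_cast hcol i
    _ = (D : ℝ) ^ q * ∑ i, ρ i ^ q := by
        rw [← Finset.mul_sum, ← mul_assoc, ← Real.rpow_add_one' (Nat.cast_nonneg D) (by linarith),
          sub_add_cancel]

section IterStar

variable {X : Type*} {ι : Type} {S : ι → Set X}

theorem iterStar_subset_iterStar_succ {k j : ι} (hkj : (S k ∩ S j).Nonempty) (a : ℕ) :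
    iterStar S a k ⊆ iterStar S (a + 1) j := by
  induction a with
  | zero => exact fun _ hz => mem_biUnion hkj hz
  | succ a ih =>
    intro z hz
    obtain ⟨l, ⟨y, hyl, hyk⟩, hzl⟩ := mem_iUnion₂.1 hz
    exact mem_biUnion ⟨y, hyl, ih hyk⟩ hzl

theorem iterStar_subset_iterStar_add_succ {j k : ι} {b : ℕ}
    (h : (S j ∩ iterStar S b k).Nonempty) (a : ℕ) :
    iterStar S a k ⊆ iterStar S (a + b + 1) j := by
  induction b generalizing j with
  | zero =>
    obtain ⟨x, hxj, hxk⟩ := h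
    exact iterStar_subset_iterStar_succ ⟨x, hxk, hxj⟩ a
  | succ b ih =>
    obtain ⟨z, hzj, hzk⟩ := h
    obtain ⟨l, hlk, hzl⟩ := mem_iUnion₂.1 hzk
    exact (ih hlk).trans (iterStar_subset_iterStar_succ ⟨z, hzl, hzj⟩ _)

theorem inter_iterStar_nonempty_comm {i j : ι} {m : ℕ} (h : (S i ∩ iterStar S m j).Nonempty) :
    (S j ∩ iterStar S m i).Nonempty := by
  induction m generalizing i j with
  | zero => exact inter_comm (S i) (S j) ▸ h
  | succ m ih =>
    obtain ⟨z, hzi, hz⟩ := h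
    obtain ⟨l, hlj, hzl⟩ := mem_iUnion₂.1 hz
    obtain ⟨x, hxj, hxl⟩ := ih hlj
    exact ⟨x, hxj, iterStar_subset_iterStar_succ ⟨z, hzl, hzi⟩ m hxl⟩

variable [Fintype ι]

-- Since `iterStar S m = S^(m+1)`, these are the members of `S` meeting `S^(m+1)_j`.
def starNbrs (S : ι → Set X) (m : ℕ) (j : ι) : Finset ι :=
  Finset.univ.filter fun i => (S i ∩ iterStar S m j).Nonempty

theorem mem_starNbrs {m : ℕ} {i j : ι} :
    i ∈ starNbrs S m j ↔ (S i ∩ iterStar S m j).Nonempty := by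
  simp [starNbrs]

theorem mem_starNbrs_comm {m : ℕ} {i j : ι} : i ∈ starNbrs S m j ↔ j ∈ starNbrs S m i := by
  simp only [mem_starNbrs]
  exact ⟨inter_iterStar_nonempty_comm, inter_iterStar_nonempty_comm⟩

theorem card_starNbrs_zero (i : ι) :
    (starNbrs S 0 i).card = {j | (S i ∩ S j).Nonempty}.ncard := by
  rw [ncard_eq_toFinset_card']
  congr 1
  ext j
  simp [mem_starNbrs, inter_comm, iterStar]

theorem card_starNbrs_le {K : ℕ} (hbd : ∀ i, {j | (S i ∩ S j).Nonempty}.ncard ≤ K) (m : ℕ)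
    (j : ι) : (starNbrs S m j).card ≤ K ^ (m + 1) := by
  induction m generalizing j with
  | zero => simpa [card_starNbrs_zero] using hbd j
  | succ m ih =>
    have hsub : starNbrs S (m + 1) j ⊆ (starNbrs S m j).biUnion (starNbrs S 0) := by
      intro i hi
      obtain ⟨z, hzi, hz⟩ := mem_starNbrs.1 hi
      obtain ⟨l, hlj, hzl⟩ := mem_iUnion₂.1 hz
      exact Finset.mem_biUnion.2 ⟨l, mem_starNbrs.2 hlj, mem_starNbrs.2 ⟨z, hzi, hzl⟩⟩
    calc (starNbrs S (m + 1) j).card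
        ≤ (starNbrs S m j).card * K :=
          (Finset.card_le_card hsub).trans <| Finset.card_biUnion_le_card_mul _ _ _ fun l _ =>
            (card_starNbrs_zero l).trans_le (hbd l)
      _ ≤ K ^ (m + 1) * K := Nat.mul_le_mul_right K (ih j)
      _ = K ^ (m + 1 + 1) := (pow_succ K (m + 1)).symm

def starSpread (S : ι → Set X) (m : ℕ) (ρ : ι → ℝ) (j : ι) : ℝ :=
  ∑ i ∈ starNbrs S m j, ρ i

theorem exists_inter_nonempty_mem_starNbrs (hcov : ⋃ i, S i = univ) {E F : Set X} {n : ℕ}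
    (hEF : E ⊆ starNbhd (iterStar S n) F) {i : ι} (hi : (E ∩ S i).Nonempty) :
    ∃ j, (F ∩ S j).Nonempty ∧ i ∈ starNbrs S (2 * n + 1) j := by
  obtain ⟨x, hxE, hxi⟩ := hi
  obtain ⟨k, ⟨y, hyk, hyF⟩, hxk⟩ := mem_iUnion₂.1 (hEF hxE)
  obtain ⟨j, hyj⟩ := mem_iUnion.1 (hcov ▸ mem_univ y)
  have hkj : iterStar S n k ⊆ iterStar S (2 * n + 1) j := by
    rw [two_mul]
    exact iterStar_subset_iterStar_add_succ ⟨y, hyj, hyk⟩ n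
  exact ⟨j, ⟨y, hyF, hyj⟩, mem_starNbrs.2 ⟨x, hxi, hkj hxk⟩⟩

theorem sum_starSpread_rpow_le {K : ℕ}
    (hbd : ∀ i, {j | (S i ∩ S j).Nonempty}.ncard ≤ K) (m : ℕ) {q : ℝ} (hq : 1 ≤ q)
    {ρ : ι → ℝ} (hρ : ∀ i, 0 ≤ ρ i) :
    ∑ j, starSpread S m ρ j ^ q ≤ ((K : ℝ) ^ (m + 1)) ^ q * ∑ i, ρ i ^ q := by
  have hcol (i : ι) : Finset.univ.filter (fun j => i ∈ starNbrs S m j) = starNbrs S m i := by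
    ext j
    simp [mem_starNbrs_comm (i := i)]
  exact_mod_cast sum_rpow_sum_le_of_card_le (starNbrs S m) (card_starNbrs_le hbd m)
    (fun i => (hcol i).symm ▸ card_starNbrs_le hbd m i) hq hρ

end IterStar

instance (d : CurveDomain) : Nonempty d.space := by
  cases d <;> unfold CurveDomain.space <;> infer_instance

theorem Curve.len_eq_sum_filter (γ : Curve X) (S : ι → Set X) (ρ : ι → ℝ) :
    γ.len S ρ = ∑ i ∈ Finset.univ.filter fun i => (range γ.toFun ∩ S i).Nonempty, ρ i :=
  (Finset.sum_filter _ _).symm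

theorem Curve.one_le_len_one {S : ι → Set X} (hcov : ⋃ i, S i = univ) (γ : Curve X) :
    1 ≤ γ.len S 1 := by
  obtain ⟨x⟩ : Nonempty γ.dom.space := inferInstance
  obtain ⟨i, hi⟩ := mem_iUnion.1 (hcov ▸ mem_univ (γ.toFun x))
  rw [γ.len_eq_sum_filter]
  exact Finset.single_le_sum (f := (1 : ι → ℝ)) (fun _ _ => zero_le_one)
    (Finset.mem_filter.2 ⟨Finset.mem_univ i, γ.toFun x, ⟨x, rfl⟩, hi⟩)

theorem Curve.len_le_len_starSpread {S : ι → Set X} {m : ℕ} {ρ : ι → ℝ} (hρ : ∀ i, 0 ≤ ρ i)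
    {γ₁ γ₂ : Curve X} (h : ∀ i, (range γ₁.toFun ∩ S i).Nonempty →
      ∃ j, (range γ₂.toFun ∩ S j).Nonempty ∧ i ∈ starNbrs S m j) :
    γ₁.len S ρ ≤ γ₂.len S (starSpread S m ρ) := by
  set U := Finset.univ.filter fun j => (range γ₂.toFun ∩ S j).Nonempty
  have hsub : (Finset.univ.filter fun i => (range γ₁.toFun ∩ S i).Nonempty) ⊆
      U.biUnion (starNbrs S m) := by
    intro i hi
    obtain ⟨j, hj, hij⟩ := h i (Finset.mem_filter.1 hi).2
    exact Finset.mem_biUnion.2 ⟨j, Finset.mem_filter.2 ⟨Finset.mem_univ j, hj⟩, hij⟩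
  rw [γ₁.len_eq_sum_filter, γ₂.len_eq_sum_filter]
  exact (Finset.sum_le_sum_of_subset_of_nonneg hsub fun i _ _ => hρ i).trans
    (Finset.sum_biUnion_le_sum_sum U _ hρ)

theorem WMCurve.admissible_one {S : ι → Set X} (hcov : ⋃ i, S i = univ) {c : WMCurve X}
    (hw : ∑ j, c.w j = 1) : Admissible {c} S 1 := by
  refine ⟨fun _ => zero_le_one, ?_⟩
  intro c' hc'
  rw [mem_singleton_iff.1 hc']
  calc 1 = ∑ j, c.w j := hw.symm
    _ ≤ c.len S 1 := Finset.sum_le_sum fun j _ =>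
      le_mul_of_one_le_right (c.w_pos j).le ((c.strand j).one_le_len_one hcov)

theorem modulus_le_of_admissible {q : ℝ} {Γ : Set (WMCurve X)} {S : ι → Set X} {ρ : ι → ℝ}
    (h : Admissible Γ S ρ) : modulus q Γ S ≤ ∑ i, ρ i ^ q := by
  refine csInf_le ⟨0, ?_⟩ ⟨ρ, h, rfl⟩
  rintro _ ⟨ρ', hρ', rfl⟩
  exact Finset.sum_nonneg fun i _ => Real.rpow_nonneg (hρ'.1 i) q

theorem modulus_le_mul_modulus {q C : ℝ} (hC : 0 < C) {Γ₁ Γ₂ : Set (WMCurve X)}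
    {S : ι → Set X} (hne : ∃ ρ, Admissible Γ₁ S ρ)
    (h : ∀ ρ, Admissible Γ₁ S ρ → ∃ ρ', Admissible Γ₂ S ρ' ∧ ∑ i, ρ' i ^ q ≤ C * ∑ i, ρ i ^ q) :
    modulus q Γ₂ S ≤ C * modulus q Γ₁ S := by
  rw [← div_le_iff₀' hC]
  obtain ⟨ρ₀, hρ₀⟩ := hne
  refine le_csInf ⟨_, ρ₀, hρ₀, rfl⟩ ?_
  rintro _ ⟨ρ, hρ, rfl⟩
  obtain ⟨ρ', hρ', hvol⟩ := h ρ hρ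
  rw [div_le_iff₀' hC]
  exact (modulus_le_of_admissible hρ').trans hvol

theorem modulus_le_of_forall_range_subset_starNbhd {K n : ℕ} (hK : 0 < K) {q : ℝ} (hq : 1 ≤ q)
    {S : ι → Set X} (hcov : ⋃ i, S i = univ)
    (hbd : ∀ i, {j | (S i ∩ S j).Nonempty}.ncard ≤ K) {σ : Type} [Fintype σ] {w : σ → ℝ}
    (hw : ∀ s, 0 < w s) (hw1 : ∑ s, w s = 1) {γ₁ γ₂ : σ → Curve X}
    (h : ∀ s, range (γ₁ s).toFun ⊆ starNbhd (iterStar S n) (range (γ₂ s).toFun)) :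
    modulus q {(⟨σ, inferInstance, w, hw, γ₂⟩ : WMCurve X)} S ≤
      ((K : ℝ) ^ (2 * n + 2)) ^ q * modulus q {(⟨σ, inferInstance, w, hw, γ₁⟩ : WMCurve X)} S := by
  refine modulus_le_mul_modulus (by positivity) ⟨1, WMCurve.admissible_one hcov hw1⟩ ?_
  rintro ρ ⟨hρ, hlen⟩
  refine ⟨starSpread S (2 * n + 1) ρ,
    ⟨fun j => Finset.sum_nonneg fun i _ => hρ i, ?_⟩, sum_starSpread_rpow_le hbd _ hq hρ⟩
  rintro _ rfl
  refine (hlen _ rfl).trans (Finset.sum_le_sum fun s _ => ?_)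
  exact mul_le_mul_of_nonneg_left (Curve.len_le_len_starSpread hρ fun i hi =>
    exists_inter_nonempty_mem_starNbrs hcov (h s) hi) (hw s).le

/-- Fellow travellers: for every `K ≥ 1`, `N ∈ ℕ` and `q ≥ 1` there is a
constant `M` (depending only on `K`, `N`, `q`) such that for any space `X` with a `K`-bounded
finite cover `S`, and any two normalized weighted multi-curves `c¹`, `c²` on `X` with the same
weighted domain whose corresponding strands are contained in the `S^N`-neighborhoods of each
other, the moduli `mod_q(c¹, S)` and `mod_q(c², S)` agree up to the factor `M`. -/
theorem modulus_fellow_travellers (K : ℕ) (hK : 1 ≤ K) (N : ℕ) (q : ℝ) (hq : 1 ≤ q) :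
    ∃ M : ℝ, 0 < M ∧
      ∀ (X : Type) [TopologicalSpace X] (ι : Type) [Fintype ι]
        (S : ι → Set X), (⋃ i, S i) = Set.univ →
        (∀ i, 1 ≤ {j : ι | (S i ∩ S j).Nonempty}.ncard ∧
          {j : ι | (S i ∩ S j).Nonempty}.ncard ≤ K) →
        ∀ (σ : Type) [Fintype σ] (w : σ → ℝ) (hw : ∀ s, 0 < w s), (∑ s, w s) = 1 →
          ∀ (dom : σ → CurveDomain) (γ₁ γ₂ : ∀ s, (dom s).space → X)
            (h₁ : ∀ s, Continuous (γ₁ s)) (h₂ : ∀ s, Continuous (γ₂ s)),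
            (∀ s, Set.range (γ₁ s) ⊆ starNbhd (coverPow S N) (Set.range (γ₂ s))) →
            (∀ s, Set.range (γ₂ s) ⊆ starNbhd (coverPow S N) (Set.range (γ₁ s))) →
            M⁻¹ * modulus q {(⟨σ, inferInstance, w, hw, fun s => ⟨dom s, γ₂ s, h₂ s⟩⟩ :
                WMCurve X)} S ≤
              modulus q {(⟨σ, inferInstance, w, hw, fun s => ⟨dom s, γ₁ s, h₁ s⟩⟩ :
                WMCurve X)} S ∧
            modulus q {(⟨σ, inferInstance, w, hw, fun s => ⟨dom s, γ₁ s, h₁ s⟩⟩ :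
                WMCurve X)} S ≤
              M * modulus q {(⟨σ, inferInstance, w, hw, fun s => ⟨dom s, γ₂ s, h₂ s⟩⟩ :
                WMCurve X)} S := by
  refine ⟨((K : ℝ) ^ (2 * (N - 1) + 2)) ^ q, by positivity, ?_⟩
  intro X _ ι _ S hcov hbd σ _ w hw hw1 dom γ₁ γ₂ h₁ h₂ h₁₂ h₂₁
  have hcomp := fun (γ γ' : σ → Curve X) =>
    modulus_le_of_forall_range_subset_starNbhd (n := N - 1) hK hq hcov (fun i => (hbd i).2) hw hw1
      (γ₁ := γ) (γ₂ := γ')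
  constructor
  · rw [inv_mul_le_iff₀ (by positivity)]
    exact hcomp (fun s => ⟨dom s, γ₁ s, h₁ s⟩) (fun s => ⟨dom s, γ₂ s, h₂ s⟩) h₁₂
  · exact hcomp (fun s => ⟨dom s, γ₂ s, h₂ s⟩) (fun s => ⟨dom s, γ₁ s, h₁ s⟩) h₂₁

end
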